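/- arXiv:2512.20031 — 3 statements merged into one kernel-verified Lean document; each statement's English description precedes it below -/
import Mathlib

section
/- Let ν ∈ ℝ^d be a vector of positive integers, p ∈ (1,∞)^d, and define A = diag(1/(p_1−1), …, 1/(p_d−1)) (𝟙 νᵀ − I), where 𝟙 is the all-ones vector. Then A is an entrywise nonnegative irreducible matrix (assuming d ≥ 2, or ν_1 ≥ 2 when d = 1), and its spectral radius satisfies ρ(A) < 1 if and only if ∑_{i=1}^d ν_i/p_i < 1, and ρ(A) = 1 if and only if ∑_{i=1}^d ν_i/p_i = 1. -/
open scoped BigOperators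

/-- Spectral radius of a real square matrix: the supremum of the moduli of its
complex eigenvalues. -/
noncomputable def specRad {n : ℕ} (A : Matrix (Fin n) (Fin n) ℝ) : ℝ :=
  sSup {r : ℝ | ∃ μ : ℂ, μ ∈ spectrum ℂ (A.map (algebraMap ℝ ℂ)) ∧ r = ‖μ‖}

/-- A matrix is irreducible if for every nonempty proper subset `S` of indices there
is an edge from `S` to its complement. -/
def MatIrred {n : ℕ} (A : Matrix (Fin n) (Fin n) ℝ) : Prop :=
  ∀ S : Set (Fin n), S.Nonempty → S ≠ Set.univ → ∃ i ∈ S, ∃ j ∉ S, A i j ≠ 0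

/-!
For `r ≥ 0` the positive vector `w_r i = 1 / (1 + r (p_i - 1))` satisfies `A w_r = r w_r` exactly
when the secular equation `φ(r) := ∑ ν_j w_r j = 1` holds. The function `φ` is continuous and
strictly decreasing from `φ(0) = ∑ ν_j ≥ 1` to `0`, so the equation has a root `r ≥ 0`. A
nonnegative matrix with a positive eigenvector has that eigenvalue as its spectral radius
(Collatz–Wielandt: a positive `b` with `A b ≤ c b` bounds every eigenvalue by `c`), so `ρ(A) = r`.
Since `φ(1) = ∑ ν_i / p_i`, monotonicity of `φ` compares `r` with `1`.
-/

open Matrix Filter Topology Set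

section Spectrum

variable {ι : Type*} [Fintype ι] [DecidableEq ι]

theorem Matrix.mem_spectrum_iff_exists_mulVec_eq_smul {K : Type*} [Field K] {M : Matrix ι ι K}
    {μ : K} : μ ∈ spectrum K M ↔ ∃ v ≠ 0, M *ᵥ v = μ • v := by
  rw [spectrum.mem_iff, Matrix.isUnit_iff_isUnit_det, isUnit_iff_ne_zero, not_not,
    ← Matrix.exists_mulVec_eq_zero_iff]
  simp only [Algebra.algebraMap_eq_smul_one, sub_mulVec, smul_mulVec, one_mulVec, sub_eq_zero,
    eq_comm]

theorem Matrix.ofReal_mem_spectrum_of_mulVec_eq_smul {A : Matrix ι ι ℝ} {w : ι → ℝ} (hw : w ≠ 0)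
    {r : ℝ} (h : A *ᵥ w = r • w) : (r : ℂ) ∈ spectrum ℂ (A.map (algebraMap ℝ ℂ)) := by
  refine mem_spectrum_iff_exists_mulVec_eq_smul.mpr ⟨algebraMap ℝ ℂ ∘ w, ?_, ?_⟩
  · exact fun h0 ↦ hw (funext fun i ↦ by simpa using congrFun h0 i)
  · ext i
    rw [← RingHom.map_mulVec, h]
    simp

theorem Matrix.norm_le_of_mem_spectrum_of_mulVec_le {A : Matrix ι ι ℝ} (hA : ∀ i j, 0 ≤ A i j)
    {b : ι → ℝ} (hb : ∀ i, 0 < b i) {c : ℝ} (hc : A *ᵥ b ≤ c • b) {μ : ℂ}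
    (hμ : μ ∈ spectrum ℂ (A.map (algebraMap ℝ ℂ))) : ‖μ‖ ≤ c := by
  obtain ⟨v, hv0, hv⟩ := mem_spectrum_iff_exists_mulVec_eq_smul.mp hμ
  obtain ⟨j, hj⟩ := Function.ne_iff.mp hv0
  obtain ⟨i, -, hmax⟩ := Finset.univ.exists_max_image (fun i ↦ ‖v i‖ / b i) ⟨j, Finset.mem_univ j⟩
  set t := ‖v i‖ / b i
  have hvt (k : ι) : ‖v k‖ ≤ t * b k := (div_le_iff₀ (hb k)).mp (hmax k (Finset.mem_univ k))
  have ht : 0 < t := (div_pos (norm_pos_iff.mpr hj) (hb j)).trans_le (hmax j (Finset.mem_univ j))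
  have hvi : ‖v i‖ = t * b i := (div_mul_cancel₀ _ (hb i).ne').symm
  have key : ‖μ‖ * (t * b i) ≤ c * (t * b i) := calc
    ‖μ‖ * (t * b i) = ‖(A.map (algebraMap ℝ ℂ) *ᵥ v) i‖ := by
      rw [hv, ← hvi, Pi.smul_apply, smul_eq_mul, norm_mul]
    _ ≤ ∑ k, A i k * ‖v k‖ := by
      refine (norm_sum_le _ _).trans_eq ?_
      simp [abs_of_nonneg (hA _ _)]
    _ ≤ ∑ k, A i k * (t * b k) :=
      Finset.sum_le_sum fun k _ ↦ mul_le_mul_of_nonneg_left (hvt k) (hA i k)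
    _ = t * (A *ᵥ b) i := by
      simp only [mulVec, dotProduct, Finset.mul_sum]
      exact Finset.sum_congr rfl fun k _ ↦ by ring
    _ ≤ t * (c * b i) := by gcongr; exact hc i
    _ = c * (t * b i) := by ring
  exact le_of_mul_le_mul_right key (mul_pos ht (hb i))

end Spectrum

theorem specRad_le_of_mulVec_le {n : ℕ} {A : Matrix (Fin n) (Fin n) ℝ} (hA : ∀ i j, 0 ≤ A i j)
    {b : Fin n → ℝ} (hb : ∀ i, 0 < b i) {c : ℝ} (hc₀ : 0 ≤ c) (hc : A *ᵥ b ≤ c • b) :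
    specRad A ≤ c :=
  Real.sSup_le (by rintro r ⟨μ, hμ, rfl⟩; exact norm_le_of_mem_spectrum_of_mulVec_le hA hb hc hμ)
    hc₀

theorem specRad_eq_of_mulVec_eq_smul {n : ℕ} [NeZero n] {A : Matrix (Fin n) (Fin n) ℝ}
    (hA : ∀ i j, 0 ≤ A i j) {b : Fin n → ℝ} (hb : ∀ i, 0 < b i) {r : ℝ} (hr : 0 ≤ r)
    (h : A *ᵥ b = r • b) : specRad A = r := by
  refine le_antisymm (specRad_le_of_mulVec_le hA hb hr h.le) (le_csSup ?_ ?_)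
  · exact ⟨r, by rintro s ⟨μ, hμ, rfl⟩; exact norm_le_of_mem_spectrum_of_mulVec_le hA hb h.le hμ⟩
  · have hb0 : b ≠ 0 := fun h0 ↦ (hb 0).ne' (congrFun h0 0)
    exact ⟨r, ofReal_mem_spectrum_of_mulVec_eq_smul hb0 h, by simp [abs_of_nonneg hr]⟩

section Secular

variable {ι : Type*}

noncomputable def perronVec (p : ι → ℝ) (r : ℝ) : ι → ℝ := fun i ↦ (1 + r * (p i - 1))⁻¹

theorem perronVec_pos {p : ι → ℝ} (hp : ∀ i, 1 ≤ p i) {r : ℝ} (hr : 0 ≤ r) (i : ι) :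
    0 < perronVec p r i := by
  have := hp i
  unfold perronVec
  positivity

variable [Fintype ι]

noncomputable def secular (ν p : ι → ℝ) (r : ℝ) : ℝ := ν ⬝ᵥ perronVec p r

variable {ν p : ι → ℝ}

theorem secular_one : secular ν p 1 = ∑ i, ν i / p i := by
  simp [secular, perronVec, dotProduct, div_eq_mul_inv]

theorem secular_zero : secular ν p 0 = ∑ i, ν i := by
  simp [secular, perronVec, dotProduct]

theorem continuousOn_secular (hp : ∀ i, 1 ≤ p i) : ContinuousOn (secular ν p) (Ici 0) := by
  refine continuousOn_finsetSum _ fun i _ ↦ continuousOn_const.mul ?_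
  refine (continuousOn_const.add (continuousOn_id.mul continuousOn_const)).inv₀ fun r hr ↦ ?_
  exact (inv_pos.mp (perronVec_pos hp hr i)).ne'

theorem tendsto_secular_atTop (hp : ∀ i, 1 < p i) : Tendsto (secular ν p) atTop (𝓝 0) := by
  have h (i : ι) : Tendsto (fun r ↦ 1 + r * (p i - 1)) atTop atTop :=
    tendsto_atTop_add_const_left _ _ (tendsto_id.atTop_mul_const (sub_pos.mpr (hp i)))
  unfold secular perronVec dotProduct
  simpa using tendsto_finsetSum Finset.univ fun i _ ↦ (h i).inv_tendsto_atTop.const_mul (ν i)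

theorem secular_strictAntiOn [Nonempty ι] (hν : ∀ i, 0 < ν i) (hp : ∀ i, 1 < p i) :
    StrictAntiOn (secular ν p) (Ici 0) := by
  intro r hr s _ hrs
  refine Finset.sum_lt_sum_of_nonempty Finset.univ_nonempty fun i _ ↦ ?_
  have := hp i
  have : (0:ℝ) ≤ r := hr
  unfold perronVec
  gcongr
  exact hν i

theorem exists_secular_eq_one (hp : ∀ i, 1 < p i) (hν : 1 ≤ ∑ i, ν i) :
    ∃ r, 0 ≤ r ∧ secular ν p r = 1 := by
  obtain ⟨R, hR1, hR0⟩ := (((tendsto_secular_atTop hp).eventually (gt_mem_nhds one_pos)).and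
    (eventually_ge_atTop 0)).exists
  obtain ⟨r, hr, hr1⟩ := intermediate_value_Icc' hR0
    ((continuousOn_secular fun i ↦ (hp i).le).mono Icc_subset_Ici_self)
    ⟨hR1.le, secular_zero (ν := ν) ▸ hν⟩
  exact ⟨r, hr.1, hr1⟩

end Secular

section ScaledRankOne

variable {ι : Type*} [DecidableEq ι] {ν p : ι → ℝ}

/-- `diag(1/(p₁ - 1), …, 1/(p_d - 1)) (𝟙νᵀ - I)`. -/
noncomputable def scaledRankOneMatrix (ν p : ι → ℝ) : Matrix ι ι ℝ :=
  of fun i j ↦ 1 / (p i - 1) * (ν j - if i = j then 1 else 0)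

theorem scaledRankOneMatrix_nonneg (hν : ∀ j, 1 ≤ ν j) (hp : ∀ i, 1 < p i) (i j : ι) :
    0 ≤ scaledRankOneMatrix ν p i j := by
  have := hp i
  have := hν j
  refine mul_nonneg (by positivity) ?_
  split_ifs <;> linarith

variable [Fintype ι]

theorem scaledRankOneMatrix_mulVec_apply (x : ι → ℝ) (i : ι) :
    (scaledRankOneMatrix ν p *ᵥ x) i = 1 / (p i - 1) * (ν ⬝ᵥ x - x i) := by
  simp [scaledRankOneMatrix, mulVec, dotProduct, mul_sub, sub_mul, Finset.mul_sum, mul_assoc]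

theorem scaledRankOneMatrix_mulVec_perronVec (hp : ∀ i, 1 < p i) {r : ℝ} (hr : 0 ≤ r)
    (h : secular ν p r = 1) :
    scaledRankOneMatrix ν p *ᵥ perronVec p r = r • perronVec p r := by
  ext i
  have hpi := sub_pos.mpr (hp i)
  have : 0 < 1 + r * (p i - 1) := by positivity
  rw [scaledRankOneMatrix_mulVec_apply, ← secular, h]
  simp only [perronVec, Pi.smul_apply, smul_eq_mul]
  field_simp
  ring

end ScaledRankOne

theorem matIrred_scaledRankOneMatrix {d : ℕ} {ν p : Fin d → ℝ} (hν : ∀ j, ν j ≠ 0)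
    (hp : ∀ i, p i ≠ 1) : MatIrred (scaledRankOneMatrix ν p) := by
  rintro S ⟨i, hi⟩ hS
  obtain ⟨j, hj⟩ := (Set.ne_univ_iff_exists_notMem S).mp hS
  refine ⟨i, hi, j, hj, ?_⟩
  rw [scaledRankOneMatrix, of_apply, if_neg (ne_of_mem_of_not_mem hi hj), sub_zero]
  exact mul_ne_zero (one_div_ne_zero (sub_ne_zero.mpr (hp i))) (hν j)

/-- For `A = diag(1/(p₁−1),…,1/(p_d−1)) (𝟙νᵀ − I)` with `ν` positive integers and
`p ∈ (1,∞)^d`, the matrix `A` is nonnegative and irreducible, and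
`ρ(A) < 1 ↔ ∑ νᵢ/pᵢ < 1` and `ρ(A) = 1 ↔ ∑ νᵢ/pᵢ = 1`. -/
theorem specRad_lt_one_iff_sum_lt_one
    {d : ℕ} (ν : Fin d → ℕ) (hν : ∀ i, 1 ≤ ν i)
    (p : Fin d → ℝ) (hp : ∀ i, 1 < p i)
    (hd : 2 ≤ d ∨ (d = 1 ∧ ∀ i, 2 ≤ ν i))
    (A : Matrix (Fin d) (Fin d) ℝ)
    (hA : ∀ i j, A i j = (1 / (p i - 1)) * ((ν j : ℝ) - if i = j then 1 else 0)) :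
    (∀ i j, 0 ≤ A i j) ∧ MatIrred A ∧
      (specRad A < 1 ↔ ∑ i, (ν i : ℝ) / p i < 1) ∧
      (specRad A = 1 ↔ ∑ i, (ν i : ℝ) / p i = 1) := by
  obtain rfl : A = scaledRankOneMatrix (fun j ↦ (ν j : ℝ)) p := Matrix.ext hA
  have : NeZero d := ⟨by rcases hd with h | ⟨h, -⟩ <;> omega⟩
  have hν' (j : Fin d) : (1 : ℝ) ≤ ν j := by exact_mod_cast hν j
  have hsum : 1 ≤ ∑ j, (ν j : ℝ) :=
    (hν' 0).trans <| Finset.single_le_sum (f := fun j ↦ (ν j : ℝ)) (fun j _ ↦ by positivity)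
      (Finset.mem_univ 0)
  have hnonneg := scaledRankOneMatrix_nonneg hν' hp
  obtain ⟨r, hr₀, hr⟩ := exists_secular_eq_one hp hsum
  have hρ := specRad_eq_of_mulVec_eq_smul hnonneg (perronVec_pos (fun i ↦ (hp i).le) hr₀) hr₀
    (scaledRankOneMatrix_mulVec_perronVec hp hr₀ hr)
  have hanti : StrictAntiOn (secular (fun j ↦ (ν j : ℝ)) p) (Ici 0) :=
    secular_strictAntiOn (fun j ↦ zero_lt_one.trans_le (hν' j)) hp
  have hs : secular (fun j ↦ (ν j : ℝ)) p 1 = ∑ i, (ν i : ℝ) / p i := secular_one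
  refine ⟨hnonneg, matIrred_scaledRankOneMatrix (fun j ↦ (zero_lt_one.trans_le (hν' j)).ne')
    (fun i ↦ (hp i).ne'), ?_, ?_⟩
  · rw [hρ, ← hs, ← hanti.lt_iff_gt (mem_Ici.2 zero_le_one) (mem_Ici.2 hr₀), hr]
  · rw [hρ, ← hs, ← hanti.eq_iff_eq (mem_Ici.2 zero_le_one) (mem_Ici.2 hr₀), hr]
end

section
/- Let A ∈ ℝ^{n×n×n} be an entrywise nonnegative tensor that is weakly irreducible, and let p ≥ 3. Define Φ_j(x) = (∑_{k,l} a_{jkl} x_k x_l) / x_j^{p−1} for x ∈ ℝ_{>0}^n. If p = 3, then the spectral radius r (the largest H-eigenvalue, i.e., the largest λ such that ∑_{k,l} a_{jkl} x_k x_l = λ x_j^2 for some x > 0) satisfies r = min_{x > 0} max_{j ∈ [n]} Φ_j(x). -/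
open scoped BigOperators

/-!
If `x > 0` is an eigenvector for `r` and `z > 0` satisfies `A z² ≤ v z²` coordinatewise,
scale `z` by `t = max_j x_j / z_j`, so that `x ≤ t z` with equality at a maximizing index `j₀`.
Monotonicity and 2-homogeneity of `x ↦ A x²` give
`r x_{j₀}² = (A x²)_{j₀} ≤ t² (A z²)_{j₀} ≤ t² v z_{j₀}² = v x_{j₀}²`, hence `r ≤ v`;
the eigenvector itself attains `max_j Φ_j = r`.
-/

open Finset

section TensorApply

variable {ι : Type*} [Fintype ι] (a : ι → ι → ι → ℝ)

/-- The vector `A x²` in tensor notation. -/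
def tensorApply (x : ι → ℝ) (j : ι) : ℝ :=
  ∑ k, ∑ l, a j k l * x k * x l

variable {a}

theorem tensorApply_mono (ha : ∀ j k l, 0 ≤ a j k l) {x y : ι → ℝ} (hx : 0 ≤ x)
    (hxy : x ≤ y) (j : ι) : tensorApply a x j ≤ tensorApply a y j :=
  sum_le_sum fun k _ => sum_le_sum fun l _ =>
    mul_le_mul (mul_le_mul_of_nonneg_left (hxy k) (ha j k l)) (hxy l) (hx l)
      (mul_nonneg (ha j k l) ((hx k).trans (hxy k)))

theorem tensorApply_smul (t : ℝ) (x : ι → ℝ) (j : ι) :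
    tensorApply a (t • x) j = t ^ 2 * tensorApply a x j := by
  simp only [tensorApply, Pi.smul_apply, smul_eq_mul, mul_sum]
  exact sum_congr rfl fun k _ => sum_congr rfl fun l _ => by ring

theorem le_of_positive_eigenvector [Nonempty ι] (ha : ∀ j k l, 0 ≤ a j k l)
    {x z : ι → ℝ} {r v : ℝ} (hx : ∀ i, 0 < x i) (hxr : ∀ j, tensorApply a x j = r * x j ^ 2)
    (hz : ∀ i, 0 < z i) (hzv : ∀ j, tensorApply a z j ≤ v * z j ^ 2) : r ≤ v := by
  obtain ⟨j₀, hj₀⟩ := Finite.exists_max fun j => x j / z j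
  set t := x j₀ / z j₀
  have hx_le : x ≤ t • z := fun k => (div_le_iff₀ (hz k)).1 (hj₀ k)
  have htz : t * z j₀ = x j₀ := div_mul_cancel₀ _ (hz j₀).ne'
  have key : r * x j₀ ^ 2 ≤ v * x j₀ ^ 2 :=
    calc r * x j₀ ^ 2 = tensorApply a x j₀ := (hxr j₀).symm
      _ ≤ tensorApply a (t • z) j₀ := tensorApply_mono ha (fun k => (hx k).le) hx_le j₀
      _ = t ^ 2 * tensorApply a z j₀ := tensorApply_smul t z j₀
      _ ≤ t ^ 2 * (v * z j₀ ^ 2) := mul_le_mul_of_nonneg_left (hzv j₀) (sq_nonneg t)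
      _ = v * x j₀ ^ 2 := by rw [← htz]; ring
  exact le_of_mul_le_mul_right key (pow_pos (hx j₀) 2)

end TensorApply

theorem collatz_wielandt_H_eigenvalue_order3_general
    {n : ℕ} (hn : 0 < n)
    (a : Fin n → Fin n → Fin n → ℝ) (ha : ∀ j k l, 0 ≤ a j k l)
    (r : ℝ)
    (hr : IsGreatest {lam : ℝ | ∃ x : Fin n → ℝ, (∀ i, 0 < x i) ∧
        ∀ j, ∑ k, ∑ l, a j k l * x k * x l = lam * x j ^ 2} r) :
    IsLeast {v : ℝ | ∃ x : Fin n → ℝ, (∀ i, 0 < x i) ∧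
      v = Finset.univ.sup' (Finset.univ_nonempty_iff.mpr ⟨⟨0, hn⟩⟩)
            (fun j => (∑ k, ∑ l, a j k l * x k * x l) / x j ^ 2)} r := by
  obtain ⟨⟨x, hx, hxr⟩, -⟩ := hr
  have : Nonempty (Fin n) := ⟨⟨0, hn⟩⟩
  refine ⟨⟨x, hx, ?_⟩, ?_⟩
  · have hΦ : ∀ j ∈ univ, (∑ k, ∑ l, a j k l * x k * x l) / x j ^ 2 = r := fun j _ => by
      rw [hxr j, mul_div_cancel_right₀ r (pow_pos (hx j) 2).ne']
    rw [sup'_congr _ rfl hΦ, sup'_const]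
  · rintro v ⟨z, hz, rfl⟩
    exact le_of_positive_eigenvector ha hx hxr hz fun j =>
      (div_le_iff₀ (pow_pos (hz j) 2)).1 (le_sup' (fun j => tensorApply a z j / z j ^ 2) (mem_univ j))

/-- Min-max Collatz–Wielandt formula for the largest H-eigenvalue of a weakly
irreducible nonnegative tensor of order 3 (case `p = 3`):
`r = min_{x>0} max_j (∑_{k,l} a_{jkl} x_k x_l) / x_j²`. -/
theorem collatz_wielandt_H_eigenvalue_order3
    {n : ℕ} (hn : 0 < n)
    (a : Fin n → Fin n → Fin n → ℝ) (ha : ∀ j k l, 0 ≤ a j k l)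
    (hwirr : MatIrred (Matrix.of fun j k => ∑ l, (a j k l + a j l k)))
    (r : ℝ)
    (hr : IsGreatest {lam : ℝ | ∃ x : Fin n → ℝ, (∀ i, 0 < x i) ∧
        ∀ j, ∑ k, ∑ l, a j k l * x k * x l = lam * x j ^ 2} r) :
    IsLeast {v : ℝ | ∃ x : Fin n → ℝ, (∀ i, 0 < x i) ∧
      v = Finset.univ.sup' (Finset.univ_nonempty_iff.mpr ⟨⟨0, hn⟩⟩)
            (fun j => (∑ k, ∑ l, a j k l * x k * x l) / x j ^ 2)} r :=
  collatz_wielandt_H_eigenvalue_order3_general hn a ha r hr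
end

section
/- Let J ∈ ℝ^{n×n} be a nonsingular M-matrix, x ∈ ℝ_{>0}^n, c ∈ ℝ_{>0}^n, and r ∈ ℝ_{≥0}^n with r ≠ 0. Then the bordered matrix [[J, x],[cᵀ, 0]] ∈ ℝ^{(n+1)×(n+1)} is nonsingular, and the unique solution (d, δ) of J d + δ x + r = 0, cᵀ d = 0 satisfies δ = − (cᵀ J^{-1} r)/(cᵀ J^{-1} x) < 0. -/
open scoped BigOperators
open Matrix

/-- A nonsingular M-matrix: `M = s•I − B` with `B ≥ 0` entrywise, `s > ρ(B)`, and
nonpositive off-diagonal entries. -/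
def IsNonsingMMatrix {n : ℕ} (M : Matrix (Fin n) (Fin n) ℝ) : Prop :=
  ∃ (s : ℝ) (B : Matrix (Fin n) (Fin n) ℝ),
    (∀ i j, 0 ≤ B i j) ∧ M = s • (1 : Matrix (Fin n) (Fin n) ℝ) - B ∧ specRad B < s

/-!
Write `J = s • (1 - A)` with `A = s⁻¹ • B` entrywise nonnegative. Since `ρ(B) < s`, Gelfand's
formula (applied to the complexification of `A`) makes the Neumann series `∑ Aᵏ` converge, so
`J⁻¹ = s⁻¹ • ∑ Aᵏ` is entrywise nonnegative. An injective nonnegative matrix maps the nonzero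
nonnegative vectors `x` and `r` to nonzero nonnegative vectors, whose pairings with `c > 0` are
positive. Eliminating `d = -J⁻¹ (δ • x + r)` from `cᵀ d = 0` gives `δ = -cᵀJ⁻¹r / cᵀJ⁻¹x < 0`,
and the Schur complement of `J` in the bordered matrix is `-cᵀJ⁻¹x ≠ 0`.
-/

open Filter

theorem summable_pow_of_spectralRadius_lt_one {A : Type*} [NormedRing A] [NormedAlgebra ℂ A]
    [CompleteSpace A] {a : A} (ha : spectralRadius ℂ a < 1) : Summable (a ^ ·) := by
  obtain ⟨t, hat, ht1⟩ := ENNReal.lt_iff_exists_nnreal_btwn.mp ha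
  have hbound : ∀ᶠ k in atTop, ‖a ^ k‖ ≤ (t : ℝ) ^ k := by
    have hroot := spectrum.pow_nnnorm_pow_one_div_tendsto_nhds_spectralRadius a
    filter_upwards [hroot.eventually_lt_const hat, eventually_ne_atTop 0] with k hk hk0
    rw [one_div, ENNReal.rpow_inv_lt_iff (by positivity), ENNReal.rpow_natCast] at hk
    exact_mod_cast hk.le
  exact .of_norm_bounded_eventually_nat
    (summable_geometric_of_lt_one t.coe_nonneg (by exact_mod_cast ht1)) hbound

namespace Matrix

section Neumann

variable {m : Type*} [Fintype m] [DecidableEq m]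

theorem summable_pow_of_summable_pow_map_ofReal {A : Matrix m m ℝ}
    (h : Summable (A.map (algebraMap ℝ ℂ) ^ ·)) : Summable (A ^ ·) := by
  convert h.map (AddMonoidHom.mapMatrix Complex.reAddGroupHom)
    (continuous_id.matrix_map Complex.continuous_re) with k
  rw [Function.comp_apply, ← RingHom.mapMatrix_apply, ← map_pow]
  ext i j
  simp

theorem tsum_pow_apply_nonneg {A : Matrix m m ℝ} (hA : ∀ i j, 0 ≤ A i j)
    (h : Summable (A ^ ·)) (i j : m) : 0 ≤ (∑' k, A ^ k) i j :=
  (h.hasSum.map (entryAddMonoidHom ℝ i j) (continuous_id.matrix_elem i j)).nonneg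
    fun k => pow_apply_nonneg hA k i j

end Neumann

section Bordered

variable {m K : Type*} [Fintype m] [DecidableEq m] [Field K]

theorem mulVec_add_smul_add_eq_zero_iff {J : Matrix m m K} (hJ : IsUnit J)
    {d x r : m → K} {δ : K} :
    J *ᵥ d + δ • x + r = 0 ↔ d = -(δ • J⁻¹ *ᵥ x + J⁻¹ *ᵥ r) := by
  have hdet : IsUnit J.det := (isUnit_iff_isUnit_det J).mp hJ
  rw [add_assoc, add_eq_zero_iff_eq_neg, ← (mulVec_injective_iff_isUnit.mpr hJ).eq_iff (a := d)]
  simp only [mulVec_neg, mulVec_add, mulVec_smul, mulVec_mulVec, mul_nonsing_inv _ hdet,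
    one_mulVec]

theorem bordered_system_iff {J : Matrix m m K} (hJ : IsUnit J) {d x c r : m → K} {δ : K}
    (hα : c ⬝ᵥ J⁻¹ *ᵥ x ≠ 0) :
    (J *ᵥ d + δ • x + r = 0 ∧ c ⬝ᵥ d = 0) ↔
      d = -(δ • J⁻¹ *ᵥ x + J⁻¹ *ᵥ r) ∧ δ = -(c ⬝ᵥ J⁻¹ *ᵥ r) / (c ⬝ᵥ J⁻¹ *ᵥ x) := by
  rw [mulVec_add_smul_add_eq_zero_iff hJ]
  refine and_congr_right fun hd => ?_
  rw [hd, dotProduct_neg, dotProduct_add, dotProduct_smul, smul_eq_mul, neg_eq_zero,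
    eq_div_iff hα]
  constructor <;> intro h <;> linear_combination h

theorem existsUnique_bordered_solution {J : Matrix m m K} (hJ : IsUnit J) {x c r : m → K}
    (hα : c ⬝ᵥ J⁻¹ *ᵥ x ≠ 0) :
    ∃! dδ : (m → K) × K, J *ᵥ dδ.1 + dδ.2 • x + r = 0 ∧ c ⬝ᵥ dδ.1 = 0 := by
  set δ := -(c ⬝ᵥ J⁻¹ *ᵥ r) / (c ⬝ᵥ J⁻¹ *ᵥ x)
  refine ⟨(-(δ • J⁻¹ *ᵥ x + J⁻¹ *ᵥ r), δ), (bordered_system_iff hJ hα).2 ⟨rfl, rfl⟩, ?_⟩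
  rintro ⟨d, δ'⟩ (h : J *ᵥ d + δ' • x + r = 0 ∧ c ⬝ᵥ d = 0)
  obtain ⟨hd, hδ⟩ := (bordered_system_iff hJ hα).1 h
  subst hδ hd
  rfl

theorem det_fromBlocks_replicateCol_replicateRow_zero {J : Matrix m m K} (hJ : IsUnit J)
    (x c : m → K) :
    (fromBlocks J (replicateCol Unit x) (replicateRow Unit c) 0).det =
      -(J.det * (c ⬝ᵥ J⁻¹ *ᵥ x)) := by
  have := J.invertibleOfIsUnitDet ((isUnit_iff_isUnit_det J).mp hJ)
  rw [det_fromBlocks₁₁, invOf_eq_nonsing_inv, Matrix.mul_assoc, ← replicateCol_mulVec, zero_sub,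
    det_unique (n := Unit), neg_apply, replicateRow_mul_replicateCol_apply, mul_neg]

theorem isUnit_fromBlocks_replicateCol_replicateRow_zero {J : Matrix m m K}
    (hJ : IsUnit J) {x c : m → K} (hα : c ⬝ᵥ J⁻¹ *ᵥ x ≠ 0) :
    IsUnit (fromBlocks J (replicateCol Unit x) (replicateRow Unit c) 0) := by
  rw [isUnit_iff_isUnit_det, det_fromBlocks_replicateCol_replicateRow_zero hJ, isUnit_iff_ne_zero,
    neg_ne_zero]
  exact mul_ne_zero (hJ.map detMonoidHom).ne_zero hα

end Bordered

section Positivity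

variable {m R : Type*} [Fintype m] [Field R] [LinearOrder R] [IsStrictOrderedRing R]

theorem dotProduct_pos_of_pos_of_nonneg {c w : m → R} (hc : ∀ i, 0 < c i)
    (hw : ∀ i, 0 ≤ w i) (hw0 : w ≠ 0) : 0 < c ⬝ᵥ w := by
  obtain ⟨i, hi⟩ := Function.ne_iff.mp hw0
  exact Finset.sum_pos' (fun j _ => mul_nonneg (hc j).le (hw j))
    ⟨i, Finset.mem_univ i, mul_pos (hc i) ((hw i).lt_of_ne' hi)⟩

theorem dotProduct_mulVec_pos [DecidableEq m] {A : Matrix m m R} (hA : IsUnit A)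
    (hA0 : ∀ i j, 0 ≤ A i j) {c v : m → R} (hc : ∀ i, 0 < c i) (hv : ∀ i, 0 ≤ v i)
    (hv0 : v ≠ 0) : 0 < c ⬝ᵥ A *ᵥ v := by
  refine dotProduct_pos_of_pos_of_nonneg hc
    (fun i => Finset.sum_nonneg fun j _ => mul_nonneg (hA0 i j) (hv j)) ?_
  rw [← mulVec_zero A]
  exact (mulVec_injective_iff_isUnit.mpr hA).ne hv0

end Positivity

end Matrix

section MMatrix

attribute [local instance] Matrix.linftyOpNormedAddCommGroup Matrix.linftyOpNormedSpace
  Matrix.linftyOpNormedRing Matrix.linftyOpNormedAlgebra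

variable {n : ℕ}

theorem norm_le_specRad {B : Matrix (Fin n) (Fin n) ℝ} {μ : ℂ}
    (hμ : μ ∈ spectrum ℂ (B.map (algebraMap ℝ ℂ))) : ‖μ‖ ≤ specRad B := by
  refine le_csSup ?_ ⟨μ, hμ, rfl⟩
  refine ((spectrum.isCompact (B.map (algebraMap ℝ ℂ))).image
    (continuous_norm (E := ℂ))).bddAbove.mono ?_
  rintro _ ⟨ν, hν, rfl⟩
  exact ⟨ν, hν, rfl⟩

theorem specRad_nonneg [Nonempty (Fin n)] (B : Matrix (Fin n) (Fin n) ℝ) : 0 ≤ specRad B := by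
  obtain ⟨μ, hμ⟩ := spectrum.nonempty (B.map (algebraMap ℝ ℂ))
  exact (norm_nonneg μ).trans (norm_le_specRad hμ)

theorem spectralRadius_map_inv_smul_lt_one [Nonempty (Fin n)] {B : Matrix (Fin n) (Fin n) ℝ}
    {s : ℝ} (hs : specRad B < s) : spectralRadius ℂ ((s⁻¹ • B).map (algebraMap ℝ ℂ)) < 1 := by
  have hs0 : 0 < s := (specRad_nonneg B).trans_lt hs
  have hmap : (s⁻¹ • B).map (algebraMap ℝ ℂ) = (s⁻¹ : ℂ) • B.map (algebraMap ℝ ℂ) := by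
    ext i j
    simp
  rw [hmap, ← ENNReal.coe_one]
  refine spectrum.spectralRadius_lt_of_forall_lt _ fun z hz => ?_
  rw [spectrum.smul_eq_smul _ _ (spectrum.nonempty _)] at hz
  obtain ⟨μ, hμ, rfl⟩ := hz
  beta_reduce
  rw [← NNReal.coe_lt_coe, coe_nnnorm, NNReal.coe_one, smul_eq_mul, norm_mul, norm_inv,
    Complex.norm_real, Real.norm_of_nonneg hs0.le, inv_mul_lt_one₀ hs0]
  exact (norm_le_specRad hμ).trans_lt hs

theorem IsNonsingMMatrix.exists_nonneg_right_inverse {J : Matrix (Fin n) (Fin n) ℝ}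
    (hJ : IsNonsingMMatrix J) : ∃ K : Matrix (Fin n) (Fin n) ℝ, J * K = 1 ∧ ∀ i j, 0 ≤ K i j := by
  obtain ⟨s, B, hB, rfl, hs⟩ := hJ
  cases isEmpty_or_nonempty (Fin n)
  · exact ⟨0, Subsingleton.elim _ _, fun i => isEmptyElim i⟩
  have hs0 : 0 < s := (specRad_nonneg B).trans_lt hs
  have hsum : Summable ((s⁻¹ • B) ^ ·) := summable_pow_of_summable_pow_map_ofReal
    (summable_pow_of_spectralRadius_lt_one (spectralRadius_map_inv_smul_lt_one hs))
  refine ⟨s⁻¹ • ∑' k, (s⁻¹ • B) ^ k, ?_, fun i j => ?_⟩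
  · have hJ : s • (1 : Matrix (Fin n) (Fin n) ℝ) - B = s • (1 - s⁻¹ • B) := by
      rw [smul_sub, smul_smul, mul_inv_cancel₀ hs0.ne', one_smul]
    rw [hJ, smul_mul_smul_comm, mul_inv_cancel₀ hs0.ne', one_smul, hsum.one_sub_mul_tsum_pow]
  · have hA : ∀ i j, 0 ≤ (s⁻¹ • B) i j := fun i j =>
      mul_nonneg (inv_nonneg.mpr hs0.le) (hB i j)
    exact mul_nonneg (inv_nonneg.mpr hs0.le) (tsum_pow_apply_nonneg hA hsum i j)

theorem IsNonsingMMatrix.isUnit {J : Matrix (Fin n) (Fin n) ℝ} (hJ : IsNonsingMMatrix J) :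
    IsUnit J := by
  obtain ⟨K, hK, -⟩ := hJ.exists_nonneg_right_inverse
  exact (isUnit_iff_isUnit_det J).mpr (isUnit_det_of_right_inverse hK)

theorem IsNonsingMMatrix.inv_apply_nonneg {J : Matrix (Fin n) (Fin n) ℝ}
    (hJ : IsNonsingMMatrix J) (i j : Fin n) : 0 ≤ J⁻¹ i j := by
  obtain ⟨K, hK, hK0⟩ := hJ.exists_nonneg_right_inverse
  rw [inv_eq_right_inv hK]
  exact hK0 i j

end MMatrix

/-- For a nonsingular M-matrix `J`, positive `x, c` and nonzero nonnegative `r`,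
the bordered matrix `[[J, x],[cᵀ, 0]]` is nonsingular, and the unique solution
`(d, δ)` of `J d + δ x + r = 0`, `cᵀ d = 0` has
`δ = −(cᵀJ⁻¹r)/(cᵀJ⁻¹x) < 0`. -/
theorem bordered_nonsing_M_matrix_delta
    {n : ℕ} (J : Matrix (Fin n) (Fin n) ℝ) (hJ : IsNonsingMMatrix J)
    (x : Fin n → ℝ) (hx : ∀ i, 0 < x i)
    (c : Fin n → ℝ) (hc : ∀ i, 0 < c i)
    (r : Fin n → ℝ) (hr : ∀ i, 0 ≤ r i) (hr0 : r ≠ 0) :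
    IsUnit (Matrix.fromBlocks J (Matrix.of fun i (_ : Unit) => x i)
        (Matrix.of fun (_ : Unit) j => c j) (0 : Matrix Unit Unit ℝ)) ∧
      (∃! dδ : (Fin n → ℝ) × ℝ,
        J.mulVec dδ.1 + dδ.2 • x + r = 0 ∧ c ⬝ᵥ dδ.1 = 0) ∧
      (∀ dδ : (Fin n → ℝ) × ℝ,
        J.mulVec dδ.1 + dδ.2 • x + r = 0 → c ⬝ᵥ dδ.1 = 0 →
          dδ.2 = -(c ⬝ᵥ J⁻¹.mulVec r) / (c ⬝ᵥ J⁻¹.mulVec x) ∧ dδ.2 < 0) := by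
  have hJu : IsUnit J := hJ.isUnit
  have hJinv : IsUnit J⁻¹ := isUnit_nonsing_inv_iff.mpr hJu
  obtain ⟨i, -⟩ := Function.ne_iff.mp hr0
  have hx0 : x ≠ 0 := fun h => (hx i).ne' (congrFun h i)
  have hα : 0 < c ⬝ᵥ J⁻¹ *ᵥ x :=
    dotProduct_mulVec_pos hJinv hJ.inv_apply_nonneg hc (fun i => (hx i).le) hx0
  have hβ : 0 < c ⬝ᵥ J⁻¹ *ᵥ r := dotProduct_mulVec_pos hJinv hJ.inv_apply_nonneg hc hr hr0
  refine ⟨isUnit_fromBlocks_replicateCol_replicateRow_zero hJu hα.ne',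
    existsUnique_bordered_solution hJu hα.ne', fun dδ h1 h2 => ?_⟩
  have hδ := ((bordered_system_iff hJu hα.ne').1 ⟨h1, h2⟩).2
  exact ⟨hδ, hδ ▸ div_neg_of_neg_of_pos (neg_neg_of_pos hβ) hα⟩
end
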